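/- Let A be an n×n binary matrix. The minimum over h ∈ ℝ₊ⁿ of the off-diagonal ℓ0 error |{(i,j) : i≠j, A_{ij} ≠ h_i h_j}| equals the minimum over h ∈ [0,1]ⁿ of the off-diagonal ℓ1 error ∑_{i≠j}|A_{ij} − h_i h_j|. -/

import Mathlib

/-!
Rounding a nonnegative `h` to the indicator of its support never breaks an exact match
`A i j = h i * h j` with `A i j ∈ {0, 1}`, so the ℓ0 minimum is attained on `{0, 1}ⁿ`.
On the cube `[0, 1]ⁿ`, each term `|A i j - h i * h j|` is affine in every single coordinate
(the sign of `A i j - h i * h j` is fixed by `A i j`), hence so is the ℓ1 error, and fixing the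
coordinates one by one at the better endpoint shows that the ℓ1 minimum is attained on `{0, 1}ⁿ`
too. There the two errors agree.
-/

open Finset Function

theorem mem_Icc_of_eq_zero_or_eq_one {x : ℝ} (hx : x = 0 ∨ x = 1) :
    x ∈ Set.Icc (0 : ℝ) 1 := by
  rcases hx with rfl | rfl <;> simp

section Cube

variable {ι : Type*} [Fintype ι] [DecidableEq ι]

theorem exists_binary_le_of_affine_in_each_coord {f : (ι → ℝ) → ℝ}
    (hf : ∀ h : ι → ℝ, (∀ i, h i ∈ Set.Icc 0 1) → ∀ i,
      f h = (1 - h i) * f (update h i 0) + h i * f (update h i 1))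
    {h : ι → ℝ} (hh : ∀ i, h i ∈ Set.Icc 0 1) :
    ∃ v : ι → ℝ, (∀ i, v i = 0 ∨ v i = 1) ∧ f v ≤ f h := by
  suffices key : ∀ s : Finset ι, ∀ h : ι → ℝ, (∀ i, h i ∈ Set.Icc 0 1) →
      (∀ i ∉ s, h i = 0 ∨ h i = 1) →
      ∃ v : ι → ℝ, (∀ i, v i = 0 ∨ v i = 1) ∧ f v ≤ f h from
    key univ h hh fun i hi => absurd (mem_univ i) hi
  intro s
  induction s using Finset.induction_on with
  | empty => exact fun h _ hbin => ⟨h, fun i => hbin i (notMem_empty i), le_rfl⟩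
  | insert a s _ ih =>
    intro h hh hbin
    obtain ⟨b, hb, hle⟩ : ∃ b : ℝ, (b = 0 ∨ b = 1) ∧ f (update h a b) ≤ f h := by
      obtain ⟨ha0, ha1⟩ := hh a
      rw [hf h hh a]
      rcases le_total (f (update h a 0)) (f (update h a 1)) with h01 | h10
      · exact ⟨0, .inl rfl, by nlinarith⟩
      · exact ⟨1, .inr rfl, by nlinarith⟩
    have hb_mem := mem_Icc_of_eq_zero_or_eq_one hb
    obtain ⟨v, hv, hvle⟩ := ih (update h a b)
      (fun i => by rcases eq_or_ne i a with rfl | hi <;> simp [*])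
      (fun i hi => by rcases eq_or_ne i a with rfl | hia <;> simp_all)
    exact ⟨v, hv, hvle.trans hle⟩

end Cube

theorem abs_binary_sub_mul {c d t : ℝ} (hc : c = 0 ∨ c = 1) (hd : d ∈ Set.Icc 0 1)
    (ht : t ∈ Set.Icc 0 1) : |c - t * d| = (1 - t) * |c| + t * |c - d| := by
  obtain ⟨hd0, hd1⟩ := hd
  obtain ⟨ht0, ht1⟩ := ht
  rcases hc with rfl | rfl
  · simp only [zero_sub, abs_neg, abs_zero, abs_of_nonneg hd0, abs_of_nonneg (mul_nonneg ht0 hd0)]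
    ring
  · rw [abs_of_nonneg (by nlinarith : 0 ≤ 1 - t * d), abs_one,
      abs_of_nonneg (by linarith : 0 ≤ 1 - d)]
    ring

theorem eq_indicator_pos_mul_of_eq_mul {c x y : ℝ} (hc : c = 0 ∨ c = 1) (hx : 0 ≤ x)
    (hy : 0 ≤ y) (hxy : c = x * y) :
    c = (if 0 < x then 1 else 0) * (if 0 < y then 1 else 0) := by
  rcases hc with rfl | rfl
  · rcases mul_eq_zero.mp hxy.symm with rfl | rfl <;> simp
  · have hx' : 0 < x := hx.lt_of_ne (by rintro rfl; simp at hxy)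
    have hy' : 0 < y := hy.lt_of_ne (by rintro rfl; simp at hxy)
    simp [hx', hy']

section OffDiagError

variable {ι : Type*} [Fintype ι] (A : Matrix ι ι ℝ)

noncomputable def offDiagL0Error (h : ι → ℝ) : ℕ :=
  (univ.offDiag.filter (fun p : ι × ι => A p.1 p.2 ≠ h p.1 * h p.2)).card

noncomputable def offDiagL1Error (h : ι → ℝ) : ℝ :=
  ∑ p ∈ univ.offDiag, |A p.1 p.2 - h p.1 * h p.2|

variable {A}

theorem offDiagL1Error_eq_offDiagL0Error (hA : ∀ i j, A i j = 0 ∨ A i j = 1) {v : ι → ℝ}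
    (hv : ∀ i, v i = 0 ∨ v i = 1) :
    offDiagL1Error A v = offDiagL0Error A v := by
  rw [offDiagL0Error, card_filter, Nat.cast_sum]
  refine sum_congr rfl fun p _ => ?_
  rcases hA p.1 p.2 with hA | hA <;> rcases hv p.1 with h1 | h1 <;> rcases hv p.2 with h2 | h2 <;>
    simp [hA, h1, h2]

theorem offDiagL0Error_indicator_pos_le (hA : ∀ i j, A i j = 0 ∨ A i j = 1) {h : ι → ℝ}
    (hh : ∀ i, 0 ≤ h i) :
    offDiagL0Error A (fun i => if 0 < h i then 1 else 0) ≤ offDiagL0Error A h :=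
  card_le_card <| monotone_filter_right _ fun p _ =>
    mt (eq_indicator_pos_mul_of_eq_mul (hA p.1 p.2) (hh p.1) (hh p.2))

theorem offDiagL1Error_eq_interp [DecidableEq ι] (hA : ∀ i j, A i j = 0 ∨ A i j = 1)
    (h : ι → ℝ) (hh : ∀ i, h i ∈ Set.Icc 0 1) (i : ι) :
    offDiagL1Error A h = (1 - h i) * offDiagL1Error A (update h i 0) +
      h i * offDiagL1Error A (update h i 1) := by
  simp only [offDiagL1Error, mul_sum, ← sum_add_distrib]
  refine sum_congr rfl fun p hp => ?_
  obtain ⟨-, -, hne⟩ := mem_offDiag.mp hp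
  rcases eq_or_ne p.1 i with rfl | h1
  · simpa [update_of_ne hne.symm] using abs_binary_sub_mul (hA p.1 p.2) (hh p.2) (hh p.1)
  rcases eq_or_ne p.2 i with rfl | h2
  · simpa [update_of_ne hne, mul_comm (h p.1)] using
      abs_binary_sub_mul (hA p.1 p.2) (hh p.1) (hh p.2)
  · simp only [update_of_ne h1, update_of_ne h2]
    ring

end OffDiagError

theorem stmt4 (n : ℕ) (A : Matrix (Fin n) (Fin n) ℝ)
    (hA : ∀ i j, A i j = 0 ∨ A i j = 1) :
    sInf {y : ℝ | ∃ h : Fin n → ℝ, (∀ i, 0 ≤ h i) ∧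
        y = ((Finset.univ.offDiag.filter
          (fun p : Fin n × Fin n => A p.1 p.2 ≠ h p.1 * h p.2)).card : ℝ)} =
      sInf {y : ℝ | ∃ h : Fin n → ℝ, (∀ i, 0 ≤ h i ∧ h i ≤ 1) ∧
        y = ∑ p ∈ Finset.univ.offDiag, |A p.1 p.2 - h p.1 * h p.2|} := by
  change sInf {y : ℝ | ∃ h : Fin n → ℝ, (∀ i, 0 ≤ h i) ∧ y = offDiagL0Error A h} =
    sInf {y : ℝ | ∃ h : Fin n → ℝ, (∀ i, h i ∈ Set.Icc 0 1) ∧ y = offDiagL1Error A h}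
  refine csInf_eq_csInf_of_forall_exists_le ?_ ?_
  · rintro _ ⟨h, hh, rfl⟩
    set v : Fin n → ℝ := fun i => if 0 < h i then 1 else 0
    have hv : ∀ i, v i = 0 ∨ v i = 1 := fun i => by by_cases 0 < h i <;> simp [v, *]
    refine ⟨offDiagL1Error A v, ⟨v, fun i => mem_Icc_of_eq_zero_or_eq_one (hv i), rfl⟩, ?_⟩
    rw [offDiagL1Error_eq_offDiagL0Error hA hv]
    exact Nat.cast_le.mpr (offDiagL0Error_indicator_pos_le hA hh)
  · rintro _ ⟨h, hh, rfl⟩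
    obtain ⟨v, hv, hle⟩ :=
      exists_binary_le_of_affine_in_each_coord (offDiagL1Error_eq_interp hA) hh
    refine ⟨offDiagL0Error A v,
      ⟨v, fun i => (mem_Icc_of_eq_zero_or_eq_one (hv i)).1, rfl⟩, ?_⟩
    rwa [← offDiagL1Error_eq_offDiagL0Error hA hv]
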